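/- Under the same assumptions as the multiplier error bound but with G_k replaced by the true gradient ∇f(X_k), the true Lagrange multiplier Y_k^true = M(X_k)(H(X_k)(∇c(X_k)⁺)ᵀc(X_k) − ∇f(X_k)) satisfies ‖Y_k^true − y_⋆‖₂ ≤ κ_y‖X_k − x_⋆‖₂ with κ_y := κ_H L_c r^{−2} + L_{∇f} r^{−1} + κ_{∇f} L_M. -/

import Mathlib

open Matrix Metric
open scoped Matrix.Norms.L2Operator

/-- View a plain tuple as an element of Euclidean space (for the `ℓ²` norm). -/
def toE {k : ℕ} (x : Fin k → ℝ) : EuclideanSpace ℝ (Fin k) := WithLp.toLp 2 x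

/-- View a Euclidean vector as a plain tuple. -/
def toV {k : ℕ} (x : EuclideanSpace ℝ (Fin k)) : Fin k → ℝ := WithLp.ofLp x

/-- Moore–Penrose pseudoinverse of a full-column-rank matrix. -/
noncomputable def Matrix.pinv {n m : ℕ} (A : Matrix (Fin n) (Fin m) ℝ) :
    Matrix (Fin m) (Fin n) ℝ :=
  (Aᵀ * A)⁻¹ * Aᵀ

/-!
Write `p = (∇c(X_k)⁺)ᵀ c(X_k)`. The error splits as
`M(X_k) H(X_k) p + M(X_k) (∇f(x_⋆) − ∇f(X_k)) + (M(x_⋆) − M(X_k)) ∇f(x_⋆)`,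
and each term is bounded by the Lipschitz and norm bounds. For the first one, `c(x_⋆) = 0` gives
`‖c(X_k)‖ ≤ L_c ‖X_k − x_⋆‖`, and `(A⁺)ᵀ = A (AᵀA)⁻¹` has operator norm at most `r⁻¹` whenever
`r ‖w‖ ≤ ‖A w‖`: for `w = (AᵀA)⁻¹ v` one has `‖A w‖² = ⟪w, v⟫ ≤ r⁻¹ ‖A w‖ ‖v‖`.
-/

namespace Matrix

theorem isUnit_transpose_mul_self_of_injective {ι κ R : Type*} [Fintype ι] [Fintype κ]
    [DecidableEq κ] [Field R] [LinearOrder R] [IsStrictOrderedRing R] {A : Matrix ι κ R}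
    (hA : Function.Injective A.mulVec) : IsUnit (Aᵀ * A) := by
  have hker := ker_mulVecLin_transpose_mul_self A
  rw [LinearMap.ker_eq_bot.mpr (show Function.Injective A.mulVecLin from hA)] at hker
  exact mulVec_injective_iff_isUnit.mp (LinearMap.ker_eq_bot.mp hker)

theorem pinv_transpose {n m : ℕ} (A : Matrix (Fin n) (Fin m) ℝ) :
    A.pinvᵀ = A * (Aᵀ * A)⁻¹ := by
  rw [pinv, transpose_mul, transpose_transpose, transpose_nonsing_inv, transpose_mul,
    transpose_transpose]

variable {n m : ℕ} {A : Matrix (Fin n) (Fin m) ℝ} {r : ℝ}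

theorem mulVec_injective_of_mul_norm_le (hr : 0 < r)
    (hA : ∀ w, r * ‖w‖ ≤ ‖toE (A *ᵥ toV w)‖) : Function.Injective A.mulVec := by
  intro x y hxy
  have hzero : r * ‖toE (x - y)‖ ≤ 0 := by
    simpa [toE, toV, mulVec_sub, hxy] using hA (toE (x - y))
  have : toE (x - y) = 0 := norm_le_zero_iff.mp (nonpos_of_mul_nonpos_right hzero hr)
  exact sub_eq_zero.mp (congrArg WithLp.ofLp this)

theorem norm_pinv_transpose_mulVec_le (hr : 0 < r)
    (hA : ∀ w, r * ‖w‖ ≤ ‖toE (A *ᵥ toV w)‖) (v : EuclideanSpace ℝ (Fin m)) :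
    ‖toE (A.pinvᵀ *ᵥ toV v)‖ ≤ r⁻¹ * ‖v‖ := by
  set w := (Aᵀ * A)⁻¹ *ᵥ toV v
  have hdet : IsUnit (Aᵀ * A).det :=
    (isUnit_iff_isUnit_det _).mp
      (isUnit_transpose_mul_self_of_injective (mulVec_injective_of_mul_norm_le hr hA))
  have hw : Aᵀ *ᵥ (A *ᵥ w) = toV v := by
    rw [mulVec_mulVec, mulVec_mulVec, mul_nonsing_inv _ hdet, one_mulVec]
  rw [pinv_transpose, ← mulVec_mulVec]
  set s := ‖toE (A *ᵥ w)‖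
  have hsq : s ^ 2 = w ⬝ᵥ toV v := by
    rw [← hw, dotProduct_mulVec, vecMul_transpose]
    exact (real_inner_self_eq_norm_sq _).symm
  have hs : s ^ 2 ≤ r⁻¹ * ‖v‖ * s :=
    calc s ^ 2 = w ⬝ᵥ toV v := hsq
      _ ≤ ‖toE w‖ * ‖v‖ := by
        simpa [toE, toV, EuclideanSpace.inner_eq_star_dotProduct, dotProduct_comm]
          using real_inner_le_norm (toE w) v
      _ ≤ r⁻¹ * s * ‖v‖ := by
        gcongr
        rw [le_inv_mul_iff₀ hr]
        exact hA (toE w)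
      _ = r⁻¹ * ‖v‖ * s := by ring
  have : 0 ≤ r⁻¹ * ‖v‖ := by positivity
  nlinarith [norm_nonneg (toE (A *ᵥ w))]

theorem norm_mulVec_sub_add_mulVec_le {p q : ℕ} (A B : Matrix (Fin p) (Fin q) ℝ)
    (u v w : EuclideanSpace ℝ (Fin q)) :
    ‖toE (A *ᵥ (toV u - toV v)) + toE (B *ᵥ toV w)‖ ≤
      ‖A‖ * ‖u‖ + ‖A‖ * ‖w - v‖ + ‖B - A‖ * ‖w‖ := by
  have hsplit : toE (A *ᵥ (toV u - toV v)) + toE (B *ᵥ toV w) =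
      toE (A *ᵥ toV u) + toE (A *ᵥ toV (w - v)) + toE ((B - A) *ᵥ toV w) := by
    ext i
    simp only [toE, toV, PiLp.add_apply, WithLp.ofLp_sub, mulVec_sub, sub_mulVec, Pi.sub_apply]
    ring
  rw [hsplit]
  refine norm_add₃_le.trans (add_le_add_three ?_ ?_ ?_) <;> exact l2_opNorm_mulVec _ _

end Matrix

theorem true_multiplier_error_bound_general {n m : ℕ}
    (Jc : EuclideanSpace ℝ (Fin n) → Matrix (Fin n) (Fin m) ℝ)
    (cf : EuclideanSpace ℝ (Fin n) → EuclideanSpace ℝ (Fin m))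
    (gradf : EuclideanSpace ℝ (Fin n) → EuclideanSpace ℝ (Fin n))
    (M : EuclideanSpace ℝ (Fin n) → Matrix (Fin m) (Fin n) ℝ)
    (Hm : EuclideanSpace ℝ (Fin n) → Matrix (Fin n) (Fin n) ℝ)
    (ε r Lc Lf κf κH LM : ℝ)
    (hr : 0 < r)
    (xstar Xk : EuclideanSpace ℝ (Fin n))
    (hXk : Xk ∈ closedBall xstar ε)
    (hcstar : cf xstar = 0)
    -- Lipschitz continuity of `c`, `∇f`, and `M` on the neighborhood
    (hcLip : ∀ x ∈ closedBall xstar ε, ∀ x' ∈ closedBall xstar ε,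
      ‖cf x - cf x'‖ ≤ Lc * ‖x - x'‖)
    (hgLip : ∀ x ∈ closedBall xstar ε, ∀ x' ∈ closedBall xstar ε,
      ‖gradf x - gradf x'‖ ≤ Lf * ‖x - x'‖)
    (hMLip : ∀ x ∈ closedBall xstar ε, ∀ x' ∈ closedBall xstar ε,
      ‖M x - M x'‖ ≤ LM * ‖x - x'‖)
    -- bounds on the neighborhood
    (hgbd : ∀ x ∈ closedBall xstar ε, ‖gradf x‖ ≤ κf)
    (hHbd : ∀ x ∈ closedBall xstar ε, ‖Hm x‖ ≤ κH)
    (hMbd : ∀ x ∈ closedBall xstar ε, ‖M x‖ ≤ r⁻¹)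
    (hsmin : ∀ x ∈ closedBall xstar ε, ∀ w : EuclideanSpace ℝ (Fin m),
      r * ‖w‖ ≤ ‖toE (Jc x *ᵥ toV w)‖)
    -- multiplier formulas
    (Yk : EuclideanSpace ℝ (Fin m)) (ystar : EuclideanSpace ℝ (Fin m))
    (hYk : Yk = toE (M Xk *ᵥ
      (Hm Xk *ᵥ ((Jc Xk).pinvᵀ *ᵥ toV (cf Xk)) - toV (gradf Xk))))
    (hystar : ystar = -toE (M xstar *ᵥ toV (gradf xstar))) :
    ‖Yk - ystar‖ ≤ (κH * Lc * r⁻¹ ^ 2 + Lf * r⁻¹ + κf * LM) * ‖Xk - xstar‖ := by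
  have hxstar : xstar ∈ closedBall xstar ε := mem_closedBall_self (dist_nonneg.trans hXk)
  set d := ‖Xk - xstar‖
  have hc : ‖cf Xk‖ ≤ Lc * d := by simpa [hcstar] using hcLip Xk hXk xstar hxstar
  have hg : ‖gradf xstar - gradf Xk‖ ≤ Lf * d := by
    simpa only [norm_sub_rev xstar Xk] using hgLip _ hxstar _ hXk
  have hM : ‖M xstar - M Xk‖ ≤ LM * d := by
    simpa only [norm_sub_rev xstar Xk] using hMLip _ hxstar _ hXk
  have hκH : 0 ≤ κH := (norm_nonneg _).trans (hHbd Xk hXk)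
  have hHp : ‖toE (Hm Xk *ᵥ ((Jc Xk).pinvᵀ *ᵥ toV (cf Xk)))‖ ≤ κH * (r⁻¹ * (Lc * d)) :=
    calc _ ≤ ‖Hm Xk‖ * ‖toE ((Jc Xk).pinvᵀ *ᵥ toV (cf Xk))‖ := l2_opNorm_mulVec _ _
      _ ≤ κH * (r⁻¹ * ‖cf Xk‖) := by
        gcongr
        exacts [hHbd Xk hXk, norm_pinv_transpose_mulVec_le hr (hsmin Xk hXk) _]
      _ ≤ κH * (r⁻¹ * (Lc * d)) := by gcongr
  rw [hYk, hystar, sub_neg_eq_add]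
  calc _ ≤ ‖M Xk‖ * ‖toE (Hm Xk *ᵥ ((Jc Xk).pinvᵀ *ᵥ toV (cf Xk)))‖ +
        ‖M Xk‖ * ‖gradf xstar - gradf Xk‖ + ‖M xstar - M Xk‖ * ‖gradf xstar‖ :=
        norm_mulVec_sub_add_mulVec_le _ _ _ _ _
    _ ≤ r⁻¹ * (κH * (r⁻¹ * (Lc * d))) + r⁻¹ * (Lf * d) + LM * d * κf := by
        gcongr
        exacts [hMbd Xk hXk, hMbd Xk hXk, (norm_nonneg _).trans hM, hgbd xstar hxstar]
    _ = (κH * Lc * r⁻¹ ^ 2 + Lf * r⁻¹ + κf * LM) * d := by ring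

/-- Corollary 1 of the paper: the true Lagrange multiplier satisfies
`‖Y_k^true − y_⋆‖ ≤ κ_y ‖X_k − x_⋆‖` with
`κ_y = κ_H L_c r⁻² + L_{∇f} r⁻¹ + κ_{∇f} L_M`. -/
theorem true_multiplier_error_bound {n m : ℕ} (hmn : m ≤ n)
    (Jc : EuclideanSpace ℝ (Fin n) → Matrix (Fin n) (Fin m) ℝ)
    (cf : EuclideanSpace ℝ (Fin n) → EuclideanSpace ℝ (Fin m))
    (gradf : EuclideanSpace ℝ (Fin n) → EuclideanSpace ℝ (Fin n))
    (M : EuclideanSpace ℝ (Fin n) → Matrix (Fin m) (Fin n) ℝ)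
    (Hm : EuclideanSpace ℝ (Fin n) → Matrix (Fin n) (Fin n) ℝ)
    (ε r Lc Lf κf κH LM : ℝ)
    (hε : 0 ≤ ε) (hr : 0 < r) (hLc : 0 < Lc) (hLf : 0 < Lf) (hκf : 0 < κf)
    (hκH : 0 < κH) (hLM : 0 < LM)
    (xstar Xk : EuclideanSpace ℝ (Fin n))
    (hXk : Xk ∈ closedBall xstar ε)
    (hcstar : cf xstar = 0)
    -- Lipschitz continuity of `c`, `∇f`, and `M` on the neighborhood
    (hcLip : ∀ x ∈ closedBall xstar ε, ∀ x' ∈ closedBall xstar ε,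
      ‖cf x - cf x'‖ ≤ Lc * ‖x - x'‖)
    (hgLip : ∀ x ∈ closedBall xstar ε, ∀ x' ∈ closedBall xstar ε,
      ‖gradf x - gradf x'‖ ≤ Lf * ‖x - x'‖)
    (hMLip : ∀ x ∈ closedBall xstar ε, ∀ x' ∈ closedBall xstar ε,
      ‖M x - M x'‖ ≤ LM * ‖x - x'‖)
    -- bounds on the neighborhood
    (hgbd : ∀ x ∈ closedBall xstar ε, ‖gradf x‖ ≤ κf)
    (hHbd : ∀ x ∈ closedBall xstar ε, ‖Hm x‖ ≤ κH)
    (hMbd : ∀ x ∈ closedBall xstar ε, ‖M x‖ ≤ r⁻¹)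
    (hsmin : ∀ x ∈ closedBall xstar ε, ∀ w : EuclideanSpace ℝ (Fin m),
      r * ‖w‖ ≤ ‖toE (Jc x *ᵥ toV w)‖)
    -- multiplier formulas
    (Yk : EuclideanSpace ℝ (Fin m)) (ystar : EuclideanSpace ℝ (Fin m))
    (hYk : Yk = toE (M Xk *ᵥ
      (Hm Xk *ᵥ ((Jc Xk).pinvᵀ *ᵥ toV (cf Xk)) - toV (gradf Xk))))
    (hystar : ystar = -toE (M xstar *ᵥ toV (gradf xstar))) :
    ‖Yk - ystar‖ ≤ (κH * Lc * r⁻¹ ^ 2 + Lf * r⁻¹ + κf * LM) * ‖Xk - xstar‖ :=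
  true_multiplier_error_bound_general Jc cf gradf M Hm ε r Lc Lf κf κH LM hr xstar Xk hXk hcstar
    hcLip hgLip hMLip hgbd hHbd hMbd hsmin Yk ystar hYk hystar
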